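/- arXiv:2110.08852 — 3 statements merged into one kernel-verified Lean document; each statement's English description precedes it below -/
import Mathlib

section
/- Let G be a non-trivial finite solvable group with Fitting height n, and suppose G = P_n⋯P_1 for some tower {P_n,…,P_1} in G of height n. If N is a normal subgroup of G and P_nN/N ≠ 1, then {P_nN/N, …, P_1N/N} is a tower in G/N. -/
open Pointwise

/-- The Fitting subgroup of a group: the largest nilpotent normal subgroup
(defined as the join of all nilpotent normal subgroups). -/
def FittingSubgroup (G : Type*) [Group G] : Subgroup G :=
  sSup {H : Subgroup G | H.Normal ∧ Group.IsNilpotent H}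

theorem FittingSubgroup_normal (G : Type*) [Group G] : (FittingSubgroup G).Normal := by
  constructor
  intro x hx g
  rw [FittingSubgroup, sSup_eq_iSup'] at hx ⊢
  refine Subgroup.iSup_induction _ (C := fun y => g * y * g⁻¹ ∈ _) hx ?_ ?_ ?_
  · rintro ⟨H, hHn, hHnil⟩ y hy
    exact Subgroup.mem_iSup_of_mem ⟨H, hHn, hHnil⟩ (hHn.conj_mem y hy g)
  · simpa using Subgroup.one_mem _
  · intro y z hy hz
    have h : g * (y * z) * g⁻¹ = g * y * g⁻¹ * (g * z * g⁻¹) := by group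
    rw [h]; exact Subgroup.mul_mem _ hy hz

/-- The Fitting series of a group, together with the proof of normality of its terms:
`F 0 = ⊥` and `F (i+1) / F i = FittingSubgroup (G ⧸ F i)`. -/
noncomputable def fittingSeriesAux (G : Type*) [Group G] : ℕ → {H : Subgroup G // H.Normal}
  | 0 => ⟨⊥, inferInstance⟩
  | n + 1 =>
    let N := fittingSeriesAux G n
    haveI : N.1.Normal := N.2
    ⟨(FittingSubgroup (G ⧸ N.1)).comap (QuotientGroup.mk' N.1),
      (FittingSubgroup_normal _).comap _⟩

/-- The Fitting series of a group. -/
noncomputable def fittingSeries (G : Type*) [Group G] (n : ℕ) : Subgroup G :=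
  (fittingSeriesAux G n).1

/-- The Fitting height: the least `n` with `fittingSeries G n = ⊤`. -/
noncomputable def fittingHeight (G : Type*) [Group G] : ℕ :=
  sInf {n | fittingSeries G n = ⊤}

/-- `rho G 0 = G`, `rho G 1 = ⋂ i, γ_i(G)` (the nilpotent residual), and
`rho G (k+1) = ρ₁(rho G k)` viewed as a subgroup of `G`. -/
noncomputable def rho (G : Type*) [Group G] : ℕ → Subgroup G
  | 0 => ⊤
  | n + 1 => Subgroup.map (rho G n).subtype (⨅ i : ℕ, Subgroup.lowerCentralSeries (⊤ : Subgroup (rho G n)) i)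

/-- `Ω m`: the number of prime divisors of `m`, counted with multiplicity. -/
def bigOmega (m : ℕ) : ℕ := m.primeFactorsList.length

/-- A Fermat prime is a prime of the form `2 ^ 2 ^ k + 1`. -/
def IsFermatPrime (p : ℕ) : Prop := p.Prime ∧ ∃ k : ℕ, p = 2 ^ 2 ^ k + 1

open Classical in
/-- `Ω₁ m`: the number of odd Fermat prime divisors of `m`, counted with multiplicity. -/
noncomputable def bigOmegaOne (m : ℕ) : ℕ :=
  (m.primeFactorsList.filter fun p => Odd p ∧ IsFermatPrime p).length

/-- A tower of height `n` in `G`: subgroups `P n, …, P 1` such that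
(1) each `P i` is a non-trivial `p i`-group with `p (i+1) ≠ p i`,
(2) `P i` normalizes `P j` for `i < j`, and
(3) with `C n = 1` and `C i = C_{P i}(P (i+1) / C (i+1))`, one has
`[P i / C i, P (i-1)] = P i / C i`, expressed as `⁅P i, P (i-1)⁆ ⊔ C i = P i`. -/
def IsTower {G : Type*} [Group G] (n : ℕ) (P : ℕ → Subgroup G) : Prop :=
  (∀ i, 1 ≤ i → i ≤ n → P i ≠ ⊥) ∧
  (∃ p : ℕ → ℕ,
    (∀ i, 1 ≤ i → i ≤ n → (p i).Prime ∧ IsPGroup (p i) (P i)) ∧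
    (∀ i, 1 ≤ i → i + 1 ≤ n → p (i + 1) ≠ p i)) ∧
  (∀ i j, 1 ≤ i → i < j → j ≤ n → ∀ x ∈ P i, ∀ y ∈ P j, x * y * x⁻¹ ∈ P j) ∧
  (∃ C : ℕ → Subgroup G,
    C n = ⊥ ∧
    (∀ i, 1 ≤ i → i < n →
      (C i : Set G) = {x | x ∈ P i ∧ ∀ y ∈ P (i + 1), x * y * x⁻¹ * y⁻¹ ∈ C (i + 1)}) ∧
    (∀ i, 2 ≤ i → i ≤ n → ⁅P i, P (i - 1)⁆ ⊔ C i = P i))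

/-- A weak tower: as a tower, but with condition (3) replaced by the non-triviality
of all the quotients `P i / C i`. -/
def IsWeakTower {G : Type*} [Group G] (n : ℕ) (P : ℕ → Subgroup G) : Prop :=
  (∃ p : ℕ → ℕ,
    (∀ i, 1 ≤ i → i ≤ n → (p i).Prime ∧ IsPGroup (p i) (P i)) ∧
    (∀ i, 1 ≤ i → i + 1 ≤ n → p (i + 1) ≠ p i)) ∧
  (∀ i j, 1 ≤ i → i < j → j ≤ n → ∀ x ∈ P i, ∀ y ∈ P j, x * y * x⁻¹ ∈ P j) ∧
  (∃ C : ℕ → Subgroup G,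
    C n = ⊥ ∧
    (∀ i, 1 ≤ i → i < n →
      (C i : Set G) = {x | x ∈ P i ∧ ∀ y ∈ P (i + 1), x * y * x⁻¹ * y⁻¹ ∈ C (i + 1)}) ∧
    (∀ i, 1 ≤ i → i ≤ n → C i ≠ P i))

open scoped Pointwise in
/-- `mulFrom P n k` is the setwise product `P n * P (n-1) * ⋯ * P (n - k + 1)`;
in particular `mulFrom P n n = P n * ⋯ * P 1`. -/
def mulFrom {G : Type*} [Group G] (P : ℕ → Subgroup G) (n : ℕ) : ℕ → Set G
  | 0 => 1
  | k + 1 => mulFrom P n k * (P (n - k) : Set G)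

open Classical in
/-- The `p`-length of `G`: the least number of (non-trivial) `p`-factors in a normal series
of `G` all of whose factors are `p`-groups or `p'`-groups. -/
noncomputable def pLength (p : ℕ) (G : Type*) [Group G] : ℕ :=
  sInf {l | ∃ (k : ℕ) (N : ℕ → Subgroup G),
    N 0 = ⊥ ∧ N k = ⊤ ∧ (∀ i, i < k → N i ≤ N (i + 1)) ∧ (∀ i, (N i).Normal) ∧
    (∀ i, i < k →
      (∀ x ∈ N (i + 1), ∃ m : ℕ, x ^ p ^ m ∈ N i) ∨
      (∀ x ∈ N (i + 1), ∃ m : ℕ, 0 < m ∧ m.Coprime p ∧ x ^ m ∈ N i)) ∧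
    l = ((Finset.range k).filter fun i =>
      (∀ x ∈ N (i + 1), ∃ m : ℕ, x ^ p ^ m ∈ N i) ∧ N i ≠ N (i + 1)).card}

/-- Auxiliary downward recursion defining the canonical `C`-series of a tower in the
quotient: `towerDAux Q n k` is the subgroup-carrier `D (n - k)` with `D n = {1}` and
`D i = {x ∈ Q i | ∀ y ∈ Q (i+1), [x,y] ∈ D (i+1)}` (truncated to `{1}` out of range). -/
def towerDAux {H : Type*} [Group H] (Q : ℕ → Subgroup H) (n : ℕ) : ℕ → Set H
  | 0 => {1}
  | (k+1) =>
    if n ≤ k + 1 then {1} else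
      {x | x ∈ Q (n - (k+1)) ∧ ∀ y ∈ Q (n - k), x * y * x⁻¹ * y⁻¹ ∈ towerDAux Q n k}

open scoped Pointwise in
/-- **Lemma 2**. Let `G` be a non-trivial finite solvable group of Fitting height `n`
which is the product `P n ⋯ P 1` of the subgroups of a tower of height `n`.
If `N ⊴ G` and the image of `P n` in `G ⧸ N` is non-trivial, then the images of the `P i`
form a tower in `G ⧸ N`. -/
theorem isTower_map_quotient
    (G : Type*) [Group G] [Finite G] [Group.IsSolvable G] [Nontrivial G]
    (n : ℕ) (hn : 1 ≤ n) (P : ℕ → Subgroup G)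
    (hT : IsTower n P) (hheight : fittingHeight G = n)
    (hprod : mulFrom P n n = Set.univ)
    (N : Subgroup G) [N.Normal]
    (hPn : Subgroup.map (QuotientGroup.mk' N) (P n) ≠ ⊥) :
    IsTower n (fun i => Subgroup.map (QuotientGroup.mk' N) (P i)) := by
  classical
  unfold IsTower at hT ⊢
  obtain ⟨hTne, ⟨p, hp1, hp2⟩, hTnorm, C₀, hC0n, hC0rec, hC0comm⟩ := hT
  set Q : ℕ → Subgroup (G ⧸ N) := fun i => Subgroup.map (QuotientGroup.mk' N) (P i)
    with hQdef
  have hQn : Q n ≠ ⊥ := hPn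
  have hQmem : ∀ (i : ℕ) (x : G ⧸ N), x ∈ Q i ↔ ∃ a ∈ P i, (QuotientGroup.mk' N) a = x :=
    fun i x => Subgroup.mem_map
  have hQnorm : ∀ i j, 1 ≤ i → i ≤ j → j ≤ n → ∀ x ∈ Q i, ∀ y ∈ Q j, x * y * x⁻¹ ∈ Q j := by
    intro i j hi hij hj x hx y hy
    rcases eq_or_lt_of_le hij with rfl | hlt
    · exact mul_mem (mul_mem hx hy) (inv_mem hx)
    · obtain ⟨a, ha, rfl⟩ := (hQmem i x).1 hx
      obtain ⟨b, hb, rfl⟩ := (hQmem j y).1 hy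
      exact (hQmem j _).2 ⟨a * b * a⁻¹, hTnorm i j hi hlt hj a ha b hb, by simp⟩
  -- key structural facts about `towerDAux`
  have key : ∀ k : ℕ,
      ((1 : G ⧸ N) ∈ towerDAux Q n k) ∧
      (∀ a b, a ∈ towerDAux Q n k → b ∈ towerDAux Q n k → a * b ∈ towerDAux Q n k) ∧
      (∀ a, a ∈ towerDAux Q n k → a⁻¹ ∈ towerDAux Q n k) ∧
      (∀ a, a ∈ towerDAux Q n k → a ∈ Q (n - k)) ∧
      (∀ j, 1 ≤ j → j ≤ n - k → ∀ g ∈ Q j, ∀ x ∈ towerDAux Q n k,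
        g * x * g⁻¹ ∈ towerDAux Q n k) := by
    intro k
    induction k with
    | zero =>
      refine ⟨rfl, ?_, ?_, ?_, ?_⟩
      · intro a b ha hb
        simp only [towerDAux, Set.mem_singleton_iff] at ha hb ⊢
        rw [ha, hb, mul_one]
      · intro a ha
        simp only [towerDAux, Set.mem_singleton_iff] at ha ⊢
        rw [ha, inv_one]
      · intro a ha
        simp only [towerDAux, Set.mem_singleton_iff] at ha
        rw [ha]; exact one_mem _
      · intro j _ _ g _ x hx
        simp only [towerDAux, Set.mem_singleton_iff] at hx ⊢
        rw [hx]; group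
    | succ k ih =>
      obtain ⟨ih1, ihmul, ihinv, ihsub, ihconj⟩ := ih
      by_cases hle : n ≤ k + 1
      · have e : towerDAux Q n (k + 1) = {1} := by rw [towerDAux, if_pos hle]
        rw [e]
        refine ⟨rfl, ?_, ?_, ?_, ?_⟩
        · intro a b ha hb
          simp only [Set.mem_singleton_iff] at ha hb ⊢
          rw [ha, hb, mul_one]
        · intro a ha
          simp only [Set.mem_singleton_iff] at ha ⊢
          rw [ha, inv_one]
        · intro a ha
          simp only [Set.mem_singleton_iff] at ha
          rw [ha]; exact one_mem _
        · intro j _ _ g _ x hx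
          simp only [Set.mem_singleton_iff] at hx ⊢
          rw [hx]; group
      · have hk2 : k + 2 ≤ n := by omega
        have hi1 : 1 ≤ n - (k + 1) := by omega
        have hmem : ∀ x : G ⧸ N, x ∈ towerDAux Q n (k + 1) ↔
            (x ∈ Q (n - (k+1)) ∧ ∀ y ∈ Q (n - k), x * y * x⁻¹ * y⁻¹ ∈ towerDAux Q n k) := by
          intro x; rw [towerDAux, if_neg hle]; rfl
        refine ⟨?_, ?_, ?_, ?_, ?_⟩
        · refine (hmem 1).2 ⟨one_mem _, fun y hy => ?_⟩
          have h1 : (1 : G ⧸ N) * y * 1⁻¹ * y⁻¹ = 1 := by group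
          rw [h1]; exact ih1
        · intro a b ha hb
          rw [hmem] at ha hb ⊢
          refine ⟨mul_mem ha.1 hb.1, fun y hy => ?_⟩
          have hrw : a * b * y * (a * b)⁻¹ * y⁻¹ =
              (a * (b * y * b⁻¹ * y⁻¹) * a⁻¹) * (a * y * a⁻¹ * y⁻¹) := by group
          rw [hrw]
          exact ihmul _ _
            (ihconj (n - (k+1)) hi1 (by omega) a ha.1 _ (hb.2 y hy)) (ha.2 y hy)
        · intro a ha
          rw [hmem] at ha ⊢
          refine ⟨inv_mem ha.1, fun y hy => ?_⟩
          have hrw : a⁻¹ * y * a⁻¹⁻¹ * y⁻¹ = a⁻¹ * (a * y * a⁻¹ * y⁻¹)⁻¹ * a⁻¹⁻¹ := by group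
          rw [hrw]
          exact ihconj (n - (k+1)) hi1 (by omega) a⁻¹ (inv_mem ha.1) _
            (ihinv _ (ha.2 y hy))
        · intro a ha; exact ((hmem a).1 ha).1
        · intro j hj1 hj2 g hg x hx
          rw [hmem] at hx ⊢
          refine ⟨hQnorm j (n - (k+1)) hj1 hj2 (by omega) g hg x hx.1, fun y hy => ?_⟩
          have hyg : g⁻¹ * y * g⁻¹⁻¹ ∈ Q (n - k) :=
            hQnorm j (n - k) hj1 (by omega) (by omega) g⁻¹ (inv_mem hg) y hy
          have hrw : g * x * g⁻¹ * y * (g * x * g⁻¹)⁻¹ * y⁻¹ =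
              g * (x * (g⁻¹ * y * g⁻¹⁻¹) * x⁻¹ * (g⁻¹ * y * g⁻¹⁻¹)⁻¹) * g⁻¹ := by group
          rw [hrw]
          exact ihconj j hj1 (by omega) g hg _ (hx.2 _ hyg)
  have hDmem : ∀ i, 1 ≤ i → i < n → ∀ x : G ⧸ N,
      x ∈ towerDAux Q n (n - i) ↔
        x ∈ Q i ∧ ∀ y ∈ Q (i + 1), x * y * x⁻¹ * y⁻¹ ∈ towerDAux Q n (n - (i + 1)) := by
    intro i h1 h2 x
    have e : n - i = (n - (i + 1)) + 1 := by omega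
    have hnle : ¬ n ≤ (n - (i + 1)) + 1 := by omega
    have e2 : n - ((n - (i + 1)) + 1) = i := by omega
    have e3 : n - (n - (i + 1)) = i + 1 := by omega
    rw [e, towerDAux, if_neg hnle, e2, e3]
    rfl
  -- the canonical `C`-series in the quotient
  let C : ℕ → Subgroup (G ⧸ N) := fun i =>
    { carrier := towerDAux Q n (n - i)
      one_mem' := (key (n - i)).1
      mul_mem' := fun {a b} ha hb => (key (n - i)).2.1 a b ha hb
      inv_mem' := fun {a} ha => (key (n - i)).2.2.1 a ha }
  have hCmem : ∀ (i : ℕ) (x : G ⧸ N), x ∈ C i ↔ x ∈ towerDAux Q n (n - i) :=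
    fun i x => Iff.rfl
  have hCleQ : ∀ i, 1 ≤ i → i ≤ n → C i ≤ Q i := by
    intro i h1 h2 x hx
    have h := (key (n - i)).2.2.2.1 x ((hCmem i x).1 hx)
    rwa [show n - (n - i) = i from by omega] at h
  have hCn_bot : C n = ⊥ := by
    ext x
    rw [hCmem n x, Nat.sub_self]
    simp [towerDAux, Subgroup.mem_bot]
  -- the image of the original C-series is contained in the canonical one
  have himC : ∀ d i, n - i = d → 1 ≤ i → i ≤ n →
      Subgroup.map (QuotientGroup.mk' N) (C₀ i) ≤ C i := by
    intro d
    induction d with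
    | zero =>
      intro i he h1 h2
      have : i = n := by omega
      subst this
      rw [hC0n, Subgroup.map_bot]
      exact bot_le
    | succ d ihd =>
      intro i he h1 h2
      have hin : i < n := by omega
      intro x hx
      obtain ⟨a, ha, rfl⟩ := Subgroup.mem_map.1 hx
      have haset : a ∈ (C₀ i : Set G) := ha
      rw [hC0rec i h1 hin] at haset
      obtain ⟨haP, hacomm⟩ := haset
      rw [hCmem i _, hDmem i h1 hin]
      refine ⟨(hQmem i _).2 ⟨a, haP, rfl⟩, fun y hy => ?_⟩
      obtain ⟨b, hb, rfl⟩ := (hQmem (i + 1) y).1 hy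
      have hc : QuotientGroup.mk' N (a * b * a⁻¹ * b⁻¹) ∈ C (i + 1) :=
        ihd (i + 1) (by omega) (by omega) (by omega)
          (Subgroup.mem_map.2 ⟨_, hacomm b hb, rfl⟩)
      have hc' := (hCmem (i + 1) _).1 hc
      simpa [map_mul, map_inv] using hc'
  have himC' : ∀ i, 1 ≤ i → i ≤ n →
      Subgroup.map (QuotientGroup.mk' N) (C₀ i) ≤ C i :=
    fun i h1 h2 => himC (n - i) i rfl h1 h2
  -- condition (3) in the quotient
  have hcomm : ∀ i, 2 ≤ i → i ≤ n → ⁅Q i, Q (i - 1)⁆ ⊔ C i = Q i := by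
    intro i h2 hle
    apply le_antisymm
    · apply sup_le
      · rw [Subgroup.commutator_le]
        intro a ha b hb
        have hb' : b * a⁻¹ * b⁻¹ ∈ Q i :=
          hQnorm (i - 1) i (by omega) (by omega) hle b hb a⁻¹ (inv_mem ha)
        have hrw : @Bracket.bracket _ _ commutatorElement a b = a * (b * a⁻¹ * b⁻¹) := by
          rw [commutatorElement_def]; group
        rw [hrw]
        exact mul_mem ha hb'
      · exact hCleQ i (by omega) hle
    · have him := himC' i (by omega) hle
      calc Q i = Subgroup.map (QuotientGroup.mk' N) (P i) := rfl
        _ = Subgroup.map (QuotientGroup.mk' N) (⁅P i, P (i - 1)⁆ ⊔ C₀ i) := by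
            rw [hC0comm i h2 hle]
        _ = ⁅Q i, Q (i - 1)⁆ ⊔ Subgroup.map (QuotientGroup.mk' N) (C₀ i) := by
            rw [Subgroup.map_sup, Subgroup.map_commutator]
        _ ≤ ⁅Q i, Q (i - 1)⁆ ⊔ C i := sup_le_sup_left him _
  -- the canonical series is everywhere proper
  have hCneQ : ∀ d i, n - i = d → 1 ≤ i → i ≤ n → C i ≠ Q i := by
    intro d
    induction d with
    | zero =>
      intro i he _ _
      have : i = n := by omega
      subst this
      rw [hCn_bot]
      exact fun h => hQn h.symm
    | succ d ihd =>
      intro i he h1 h2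
      have hin : i < n := by omega
      intro hEq
      have hC1 : ⁅Q (i + 1), Q i⁆ ≤ C (i + 1) := by
        rw [Subgroup.commutator_le]
        intro a ha b hb
        have hbC : b ∈ C i := hEq ▸ hb
        have hbD := ((hDmem i h1 hin b).1 ((hCmem i b).1 hbC)).2 a ha
        have hmem2 : b * a * b⁻¹ * a⁻¹ ∈ C (i + 1) := (hCmem (i + 1) _).2 hbD
        have hrw : @Bracket.bracket _ _ commutatorElement a b = (b * a * b⁻¹ * a⁻¹)⁻¹ := by
          rw [commutatorElement_def]; group
        rw [hrw]
        exact inv_mem hmem2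
      have hQC : Q (i + 1) ≤ C (i + 1) := by
        have hc := hcomm (i + 1) (by omega) (by omega)
        rw [Nat.add_sub_cancel] at hc
        rw [← hc]
        exact sup_le hC1 le_rfl
      exact ihd (i + 1) (by omega) (by omega) (by omega)
        (le_antisymm (hCleQ (i + 1) (by omega) (by omega)) hQC)
  -- condition (1) in the quotient
  have hQne : ∀ i, 1 ≤ i → i ≤ n → Q i ≠ ⊥ := by
    intro i h1 h2
    rcases eq_or_lt_of_le h2 with rfl | hin
    · exact hQn
    · intro hbot
      have hC1 : ⁅Q (i + 1), Q i⁆ = ⊥ := by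
        rw [hbot]
        refine le_bot_iff.1 ?_
        rw [Subgroup.commutator_le]
        intro a _ b hb
        rw [Subgroup.mem_bot] at hb
        rw [hb, commutatorElement_one_right]
        exact Subgroup.one_mem _
      have h3 := hcomm (i + 1) (by omega) (by omega)
      rw [Nat.add_sub_cancel, hC1, bot_sup_eq] at h3
      exact hCneQ (n - (i + 1)) (i + 1) rfl (by omega) (by omega) h3
  refine ⟨hQne, ⟨p, fun i h1 h2 => ⟨(hp1 i h1 h2).1, (hp1 i h1 h2).2.map _⟩, hp2⟩,
    fun i j h1 hij hj x hx y hy => hQnorm i j h1 (le_of_lt hij) hj x hx y hy,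
    C, hCn_bot, ?_, hcomm⟩
  intro i h1 hin
  apply Set.ext
  intro x
  simp only [Set.mem_setOf_eq, SetLike.mem_coe]
  rw [hCmem i x, hDmem i h1 hin]
  exact and_congr_right fun _ => forall_congr' fun y =>
    imp_congr Iff.rfl (hCmem (i + 1) _).symm
end

section
/- If a finite solvable group G is the product of the subgroups of a tower {P_n,…,P_1} of height n (i.e. G = P_n⋯P_1), then the Fitting height of G equals n. -/
open Pointwise

section Infra

universe u
variable {G : Type u} [Group G]

instance fittingSeries_normal (G : Type u) [Group G] (n : ℕ) : (fittingSeries G n).Normal :=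
  (fittingSeriesAux G n).2

theorem fittingSeries_zero (G : Type u) [Group G] : fittingSeries G 0 = ⊥ := rfl

theorem fittingSeries_succ (G : Type u) [Group G] (n : ℕ) :
    fittingSeries G (n + 1) =
      (FittingSubgroup (G ⧸ fittingSeries G n)).comap (QuotientGroup.mk' (fittingSeries G n)) :=
  rfl

theorem le_fittingSubgroup {H : Subgroup G} (hn : H.Normal) (hnil : Group.IsNilpotent H) :
    H ≤ FittingSubgroup G :=
  le_sSup ⟨hn, hnil⟩

theorem fittingSubgroup_eq_top_of_nilpotent [hn : Group.IsNilpotent G] :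
    FittingSubgroup G = ⊤ :=
  top_le_iff.mp (le_sSup ⟨inferInstance, Subgroup.isNilpotent ⊤⟩)

/-- Image of a nilpotent subgroup is nilpotent. -/
theorem isNilpotent_map {H : Type u} [Group H] (f : G →* H) {K : Subgroup G}
    (hK : Group.IsNilpotent K) : Group.IsNilpotent (K.map f) :=
  @nilpotent_of_surjective _ _ _ _ hK (f.subgroupMap K) (f.subgroupMap_surjective K)

/-- Image of the Fitting subgroup under a surjective hom is contained in the Fitting subgroup. -/
theorem map_fittingSubgroup_le {H : Type u} [Group H] (f : G →* H)
    (hf : Function.Surjective f) :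
    (FittingSubgroup G).map f ≤ FittingSubgroup H := by
  rw [FittingSubgroup, (Subgroup.gc_map_comap f).l_sSup]
  refine iSup_le fun N => iSup_le fun hN => ?_
  exact le_sSup ⟨hN.1.map f hf, isNilpotent_map f hN.2⟩

theorem le_fittingSeries_one {H : Subgroup G} (hn : H.Normal) (hnil : Group.IsNilpotent H) :
    H ≤ fittingSeries G 1 := by
  rw [fittingSeries_succ]
  intro x hx
  have h1 : H.map (QuotientGroup.mk' (fittingSeries G 0)) ∈
      {K : Subgroup (G ⧸ fittingSeries G 0) | K.Normal ∧ Group.IsNilpotent K} :=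
    ⟨hn.map _ (QuotientGroup.mk'_surjective _), isNilpotent_map _ hnil⟩
  exact Subgroup.mem_comap.mpr (le_sSup h1 (Subgroup.mem_map_of_mem _ hx))

theorem fittingSeries_le_succ (G : Type u) [Group G] (n : ℕ) :
    fittingSeries G n ≤ fittingSeries G (n + 1) := by
  rw [fittingSeries_succ]
  intro x hx
  simp only [Subgroup.mem_comap]
  have : QuotientGroup.mk' (fittingSeries G n) x = 1 := by
    rw [← MonoidHom.mem_ker, QuotientGroup.ker_mk']; exact hx
  rw [this]
  exact one_mem _

theorem fittingSeries_mono (G : Type u) [Group G] {m n : ℕ} (h : m ≤ n) :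
    fittingSeries G m ≤ fittingSeries G n := by
  induction n with
  | zero => simpa [Nat.le_zero.mp h] using le_refl _
  | succ n ih =>
    rcases Nat.lt_or_ge m (n+1) with h' | h'
    · exact (ih (Nat.lt_succ_iff.mp h')).trans (fittingSeries_le_succ G n)
    · have : m = n + 1 := le_antisymm h h'
      rw [this]

theorem fittingSeries_one_eq_top_of_nilpotent [hn : Group.IsNilpotent G] :
    fittingSeries G 1 = ⊤ :=
  top_le_iff.mp (le_fittingSeries_one inferInstance (Subgroup.isNilpotent ⊤))

end Infra
section Shift

universe u
variable {G : Type u} [Group G]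

/-- If `N` is a nilpotent normal subgroup, the preimage of the Fitting series of `G/N`
is contained in the (shifted) Fitting series of `G`. -/
theorem comap_fittingSeries_le (N : Subgroup G) [hN : N.Normal]
    (hnil : Group.IsNilpotent N) :
    ∀ k, (fittingSeries (G ⧸ N) k).comap (QuotientGroup.mk' N) ≤ fittingSeries G (k + 1) := by
  intro k
  induction k with
  | zero =>
    intro x hx
    rw [Subgroup.mem_comap, fittingSeries_zero, Subgroup.mem_bot] at hx
    have hx' : x ∈ (QuotientGroup.mk' N).ker := MonoidHom.mem_ker.mpr hx
    rw [QuotientGroup.ker_mk'] at hx'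
    exact le_fittingSeries_one hN hnil hx'
  | succ k ih =>
    set π := QuotientGroup.mk' N with hπ
    set B := fittingSeries G (k + 1) with hB
    have hNle : N ≤ B := le_trans (le_fittingSeries_one hN hnil)
      (fittingSeries_mono G (by omega))
    have hNker : N ≤ (QuotientGroup.mk' B).ker := by
      rw [QuotientGroup.ker_mk']; exact hNle
    set φ : G ⧸ N →* G ⧸ B := QuotientGroup.lift N (QuotientGroup.mk' B) hNker with hφ
    have hFker : fittingSeries (G ⧸ N) k ≤ φ.ker := by
      intro a ha
      obtain ⟨y, rfl⟩ := QuotientGroup.mk'_surjective N a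
      have hy : y ∈ B := ih (Subgroup.mem_comap.mpr ha)
      have : φ (π y) = QuotientGroup.mk' B y := rfl
      rw [MonoidHom.mem_ker, this, ← MonoidHom.mem_ker, QuotientGroup.ker_mk']
      exact hy
    set θ := QuotientGroup.lift (fittingSeries (G ⧸ N) k) φ hFker with hθ
    have hθsurj : Function.Surjective θ := by
      intro b
      obtain ⟨y, rfl⟩ := QuotientGroup.mk'_surjective B b
      exact ⟨QuotientGroup.mk' _ (π y), rfl⟩
    intro x hx
    rw [Subgroup.mem_comap, fittingSeries_succ, Subgroup.mem_comap] at hx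
    have h2 := map_fittingSubgroup_le θ hθsurj
      (Subgroup.mem_map_of_mem θ hx)
    have h3 : θ (QuotientGroup.mk' _ (π x)) = QuotientGroup.mk' B x := rfl
    rw [h3] at h2
    rw [fittingSeries_succ, Subgroup.mem_comap]
    exact h2

/-- The image of the (shifted) Fitting series of `G` in `G/F(G)` is contained in the
Fitting series of the quotient. -/
theorem map_fittingSeries_le (G : Type u) [Group G] :
    ∀ k, (fittingSeries G (k + 1)).map (QuotientGroup.mk' (fittingSeries G 1)) ≤
      fittingSeries (G ⧸ fittingSeries G 1) k := by
  intro k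
  induction k with
  | zero =>
    rintro _ ⟨y, hy, rfl⟩
    rw [fittingSeries_zero, Subgroup.mem_bot, ← MonoidHom.mem_ker, QuotientGroup.ker_mk']
    exact hy
  | succ k ih =>
    set π := QuotientGroup.mk' (fittingSeries G 1) with hπ
    set A := fittingSeries G (k + 1) with hA
    have hker : A ≤ ((QuotientGroup.mk' (fittingSeries (G ⧸ fittingSeries G 1) k)).comp π).ker := by
      intro a ha
      rw [MonoidHom.mem_ker, MonoidHom.comp_apply, ← MonoidHom.mem_ker, QuotientGroup.ker_mk']
      exact ih (Subgroup.mem_map_of_mem π ha)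
    set θ := QuotientGroup.lift A _ hker with hθ
    have hθsurj : Function.Surjective θ := by
      intro b
      obtain ⟨z, rfl⟩ := QuotientGroup.mk'_surjective _ b
      obtain ⟨y, rfl⟩ := QuotientGroup.mk'_surjective _ z
      exact ⟨QuotientGroup.mk' A y, rfl⟩
    rintro _ ⟨x, hx, rfl⟩
    have hx' : x ∈ (FittingSubgroup (G ⧸ fittingSeries G (k+1))).comap
        (QuotientGroup.mk' (fittingSeries G (k+1))) := by
      rw [← fittingSeries_succ]; exact hx
    rw [Subgroup.mem_comap] at hx'
    have h2 := map_fittingSubgroup_le θ hθsurj (Subgroup.mem_map_of_mem θ hx')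
    have h3 : θ (QuotientGroup.mk' A x) =
        QuotientGroup.mk' (fittingSeries (G ⧸ fittingSeries G 1) k) (π x) := rfl
    rw [h3] at h2
    show π x ∈ (FittingSubgroup ((G ⧸ fittingSeries G 1) ⧸ fittingSeries (G ⧸ fittingSeries G 1) k)).comap
      (QuotientGroup.mk' (fittingSeries (G ⧸ fittingSeries G 1) k))
    exact Subgroup.mem_comap.mpr h2

end Shift
section Upper

universe u
open scoped Pointwise

theorem fittingSeries_eq_top_of_prod :
    ∀ (n : ℕ) (G : Type u) [Group G] [Finite G] (P : ℕ → Subgroup G),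
    (∀ i, 1 ≤ i → i ≤ n → ∃ p : ℕ, p.Prime ∧ IsPGroup p (P i)) →
    (∀ i j, 1 ≤ i → i < j → j ≤ n → ∀ x ∈ P i, ∀ y ∈ P j, x * y * x⁻¹ ∈ P j) →
    mulFrom P n n = Set.univ → fittingSeries G n = ⊤ := by
  intro n
  induction n with
  | zero =>
    intro G _ _ P _ _ hprod
    rw [fittingSeries_zero, eq_top_iff]
    intro x _
    have hx : x ∈ mulFrom P 0 0 := hprod ▸ Set.mem_univ x
    rw [Subgroup.mem_bot]
    simpa [mulFrom] using hx
  | succ n ih =>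
    intro G _ _ P hp hnorm hprod
    set N := P (n + 1) with hNdef
    have key : ∀ k, k ≤ n + 1 → ∀ g ∈ mulFrom P (n+1) k, ∀ x ∈ N, g * x * g⁻¹ ∈ N := by
      intro k
      induction k with
      | zero =>
        intro _ g hg x hx
        have hg1 : g = 1 := by simpa [mulFrom] using hg
        rw [hg1]; simpa using hx
      | succ k ihk =>
        intro hk g hg x hx
        rw [mulFrom] at hg
        obtain ⟨a, ha, y, hy, rfl⟩ := Set.mem_mul.mp hg
        have h1 : y * x * y⁻¹ ∈ N := by
          rcases Nat.eq_zero_or_pos k with hk0 | hkpos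
          · subst hk0
            simp only [Nat.sub_zero] at hy
            exact N.mul_mem (N.mul_mem hy hx) (N.inv_mem hy)
          · have hi1 : 1 ≤ n + 1 - k := by omega
            have hi2 : n + 1 - k < n + 1 := by omega
            exact hnorm (n+1-k) (n+1) hi1 hi2 le_rfl y hy x hx
        have heq : a * y * x * (a * y)⁻¹ = a * (y * x * y⁻¹) * a⁻¹ := by group
        rw [heq]
        exact ihk (by omega) a ha _ h1
    have hNnormal : N.Normal := by
      constructor
      intro x hx g
      exact key (n+1) le_rfl g (hprod ▸ Set.mem_univ g) x hx
    haveI := hNnormal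
    obtain ⟨p, hpprime, hPp⟩ := hp (n+1) (by omega) le_rfl
    haveI : Fact p.Prime := ⟨hpprime⟩
    have hNnil : Group.IsNilpotent N := hPp.isNilpotent
    haveI : Finite (G ⧸ N) := Quotient.finite _
    set π := QuotientGroup.mk' N with hπdef
    set Q : ℕ → Subgroup (G ⧸ N) := fun i => Subgroup.map π (P i) with hQdef
    have hp' : ∀ i, 1 ≤ i → i ≤ n → ∃ p : ℕ, p.Prime ∧ IsPGroup p (Q i) := by
      intro i h1 h2
      obtain ⟨q, hq, hPq⟩ := hp i h1 (by omega)
      exact ⟨q, hq, hPq.map π⟩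
    have hnorm' : ∀ i j, 1 ≤ i → i < j → j ≤ n →
        ∀ x ∈ Q i, ∀ y ∈ Q j, x * y * x⁻¹ ∈ Q j := by
      intro i j h1 h2 h3 x hx y hy
      obtain ⟨a, ha, rfl⟩ := Subgroup.mem_map.mp hx
      obtain ⟨b, hb, rfl⟩ := Subgroup.mem_map.mp hy
      rw [← map_inv, ← map_mul, ← map_mul]
      exact Subgroup.mem_map_of_mem π (hnorm i j h1 h2 (by omega) a ha b hb)
    have hmapbot : π '' (N : Set G) = (1 : Set (G ⧸ N)) := by
      ext z
      constructor
      · rintro ⟨a, ha, rfl⟩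
        have : π a = 1 := by
          rw [← MonoidHom.mem_ker, QuotientGroup.ker_mk']; exact ha
        simp [this]
      · rintro hz
        rw [Set.mem_one] at hz
        exact ⟨1, N.one_mem, by simp [hz]⟩
    have him : ∀ k, k ≤ n → π '' mulFrom P (n+1) (k+1) = mulFrom Q n k := by
      intro k
      induction k with
      | zero =>
        intro _
        show π '' (mulFrom P (n+1) 0 * (P (n+1-0) : Set G)) = mulFrom Q n 0
        rw [mulFrom, one_mul]
        simpa [hNdef, mulFrom] using hmapbot
      | succ k ihk =>
        intro hk
        show π '' (mulFrom P (n+1) (k+1) * (P (n+1-(k+1)) : Set G)) = mulFrom Q n (k+1)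
        rw [Set.image_mul, ihk (by omega)]
        show mulFrom Q n k * π '' (P (n+1-(k+1)) : Set G) = mulFrom Q n k * (Q (n - k) : Set (G ⧸ N))
        congr 1
        have : n + 1 - (k+1) = n - k := by omega
        rw [this]
        exact (Subgroup.coe_map π (P (n-k))).symm
    have hprod' : mulFrom Q n n = Set.univ := by
      rw [← him n le_rfl, hprod, Set.image_univ, Set.range_eq_univ]
      exact QuotientGroup.mk'_surjective N
    have htop := ih (G ⧸ N) Q hp' hnorm' hprod'
    have hle := comap_fittingSeries_le N hNnil n
    rw [htop, Subgroup.comap_top] at hle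
    exact top_le_iff.mp hle

end Upper
section Coprime

universe u
variable {H : Type u} [Group H]

theorem sSup_normal {S : Set (Subgroup H)} (hS : ∀ K ∈ S, K.Normal) : (sSup S).Normal := by
  constructor
  intro x hx g
  rw [sSup_eq_iSup'] at hx ⊢
  refine Subgroup.iSup_induction _ (C := fun y => g * y * g⁻¹ ∈ _) hx ?_ ?_ ?_
  · rintro ⟨K, hK⟩ y hy
    exact Subgroup.mem_iSup_of_mem ⟨K, hK⟩ ((hS K hK).conj_mem y hy g)
  · simpa using Subgroup.one_mem _
  · intro y z hy hz
    have h : g * (y * z) * g⁻¹ = g * y * g⁻¹ * (g * z * g⁻¹) := by group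
    rw [h]; exact Subgroup.mul_mem _ hy hz

variable [Finite H]

instance : Finite (Subgroup H) :=
  Finite.of_injective (fun K : Subgroup H => (K : Set H)) SetLike.coe_injective

/-- every element of a subgroup satisfying a sup-closed predicate argument:
an sSup of subgroups all satisfying a predicate closed under `⊥` and `⊔` satisfies it. -/
theorem sSup_induction_subgroup (S : Set (Subgroup H)) (Q : Subgroup H → Prop)
    (hbot : Q ⊥) (hsup : ∀ A, Q A → ∀ B, Q B → Q (A ⊔ B)) (hS : ∀ K ∈ S, Q K) : Q (sSup S) := by
  have hfin : S.Finite := Set.toFinite S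
  have h1 : sSup S = hfin.toFinset.sup id := by
    rw [Finset.sup_id_eq_sSup, Set.Finite.coe_toFinset]
  rw [h1]
  apply Finset.sup_induction hbot hsup
  intro K hK
  exact hS K (hfin.mem_toFinset.mp hK)

/-- `O_p(H)`: the join of all normal `p`-subgroups. -/
def pCoreSub (H : Type u) [Group H] (p : ℕ) : Subgroup H :=
  sSup {N : Subgroup H | N.Normal ∧ IsPGroup p N}

theorem pCoreSub_normal (p : ℕ) : (pCoreSub H p).Normal :=
  sSup_normal fun _ hK => hK.1

theorem isPGroup_pCoreSub (p : ℕ) : IsPGroup p (pCoreSub H p) := by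
  have := sSup_induction_subgroup {N : Subgroup H | N.Normal ∧ IsPGroup p N}
    (fun K => K.Normal ∧ IsPGroup p K) ⟨inferInstance, IsPGroup.of_bot⟩ ?_ (fun _ hK => hK)
  · exact this.2
  · intro A hA B hB
    haveI := hA.1; haveI := hB.1
    exact ⟨Subgroup.sup_normal A B, IsPGroup.to_sup_of_normal_right hA.2 hB.2⟩

theorem card_sup_dvd (A B : Subgroup H) [hB : B.Normal] :
    Nat.card ↥(A ⊔ B) ∣ Nat.card ↥A * Nat.card ↥B := by
  have h1 : Nat.card ↥(A ⊔ B) =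
      Nat.card (↥(A ⊔ B) ⧸ B.subgroupOf (A ⊔ B)) * Nat.card ↥(B.subgroupOf (A ⊔ B)) :=
    Subgroup.card_eq_card_quotient_mul_card_subgroup _
  have h2 : Nat.card (↥(A ⊔ B) ⧸ B.subgroupOf (A ⊔ B)) = (B.subgroupOf A).index := by
    rw [← Subgroup.index_eq_card]
    exact Subgroup.relIndex_sup_right (H := A) (K := B)
  have h3 : Nat.card ↥(B.subgroupOf (A ⊔ B)) = Nat.card ↥B :=
    Nat.card_congr (Subgroup.subgroupOfEquivOfLe le_sup_right).toEquiv
  rw [h1, h2, h3]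
  exact Nat.mul_dvd_mul_right (Subgroup.index_dvd_card _) _

/-- `O_{p'}`-ish: the join of all normal subgroups of order prime to p. -/
def pPrimeCoreSub (H : Type u) [Group H] [Finite H] (p : ℕ) : Subgroup H :=
  sSup {N : Subgroup H | N.Normal ∧ ¬ p ∣ Nat.card N}

theorem pPrimeCoreSub_normal (p : ℕ) : (pPrimeCoreSub H p).Normal :=
  sSup_normal fun _ hK => hK.1

theorem not_dvd_card_pPrimeCoreSub {p : ℕ} (hp : p.Prime) : ¬ p ∣ Nat.card (pPrimeCoreSub H p) := by
  have := sSup_induction_subgroup {N : Subgroup H | N.Normal ∧ ¬ p ∣ Nat.card N}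
    (fun K => K.Normal ∧ ¬ p ∣ Nat.card K) ⟨inferInstance, ?_⟩ ?_ (fun _ hK => hK)
  · exact this.2
  · rw [Subgroup.card_bot]
    intro h
    exact hp.one_lt.ne' (Nat.eq_one_of_dvd_one h)
  · intro A hA B hB
    haveI := hB.1
    refine ⟨by haveI := hA.1; exact Subgroup.sup_normal A B, fun hdvd => ?_⟩
    have := hdvd.trans (card_sup_dvd A B)
    rcases (Nat.Prime.dvd_mul hp).mp this with h | h
    · exact hA.2 h
    · exact hB.2 h

end Coprime
section Coprime2

universe u
variable {H : Type u} [Group H] [Finite H]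

theorem exists_orderOf_eq_pow {p : ℕ} (hp : p.Prime) {K : Subgroup H} (h : IsPGroup p K)
    {x : H} (hx : x ∈ K) : ∃ k, orderOf x = p ^ k := by
  obtain ⟨k, hk⟩ := h ⟨x, hx⟩
  have hk' : x ^ p ^ k = 1 := by
    have := congrArg (Subtype.val) hk
    simpa using this
  obtain ⟨j, _, hj⟩ := (Nat.dvd_prime_pow hp).mp (orderOf_dvd_of_pow_eq_one hk')
  exact ⟨j, hj⟩

/-- An element of a finite group lies in any subgroup containing all elements of
prime power order in its cyclic span. -/
theorem mem_of_primePow_mem (g : H) (K : Subgroup H)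
    (hK : ∀ h : H, h ∈ Subgroup.zpowers g → IsPrimePow (orderOf h) → h ∈ K) : g ∈ K := by
  have main : ∀ (o : ℕ) (g : H), orderOf g = o →
      (∀ h : H, h ∈ Subgroup.zpowers g → IsPrimePow (orderOf h) → h ∈ K) → g ∈ K := by
    intro o
    induction o using Nat.strong_induction_on with
    | _ o iho =>
      intro g hgo hKg
      have hopos : 0 < o := hgo ▸ orderOf_pos g
      rcases eq_or_ne o 1 with h1 | h1
      · have : g = 1 := orderOf_eq_one_iff.mp (by rw [hgo, h1])
        rw [this]; exact K.one_mem
      by_cases hpp : IsPrimePow o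
      · exact hKg g (Subgroup.mem_zpowers g) (by rwa [hgo])
      set p := o.minFac with hpdef
      have hp : p.Prime := Nat.minFac_prime h1
      have hfac : 0 < o.factorization p :=
        Nat.Prime.factorization_pos_of_dvd hp hopos.ne' (Nat.minFac_dvd o)
      set m := p ^ o.factorization p with hmdef
      set n' := o / m with hn'def
      have hmdvd : m ∣ o := Nat.ordProj_dvd o p
      have hmn : m * n' = o := Nat.mul_div_cancel' hmdvd
      have hcop : Nat.Coprime m n' := Nat.Coprime.pow_left _ (Nat.coprime_ordCompl hp hopos.ne')
      have hm1 : 1 < m := Nat.one_lt_pow hfac.ne' hp.one_lt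
      have hn'pos : 0 < n' := Nat.div_pos (Nat.le_of_dvd hopos hmdvd) (by omega)
      have hn'1 : 1 < n' := by
        rcases Nat.lt_or_ge 1 n' with h | h
        · exact h
        · exfalso
          apply hpp
          have hone : n' = 1 := by omega
          have : m = o := by rw [← hmn, hone, mul_one]
          exact ⟨p, o.factorization p, hp.prime, hfac, this⟩
      have h2n : 2 * n' ≤ m * n' := Nat.mul_le_mul_right n' hm1
      have h2m : 2 * m ≤ n' * m := Nat.mul_le_mul_right m hn'1
      have hmn' : n' * m = o := by rw [mul_comm]; exact hmn
      have hn'lt : n' < o := by omega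
      have hmlt : m < o := by omega
      have hbez : (1 : ℤ) = m * Nat.gcdA m n' + n' * Nat.gcdB m n' := by
        have := Nat.gcd_eq_gcd_ab m n'
        rwa [Nat.Coprime.gcd_eq_one hcop, Nat.cast_one] at this
      have hgo1 : g ^ (o : ℤ) = 1 := by
        rw [zpow_natCast, ← hgo, pow_orderOf_eq_one]
      set u := g ^ ((m : ℤ) * Nat.gcdA m n') with hudef
      set v := g ^ ((n' : ℤ) * Nat.gcdB m n') with hvdef
      have hguv : g = u * v := by
        rw [hudef, hvdef, ← zpow_add, ← hbez, zpow_one]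
      have hu_mem : u ∈ Subgroup.zpowers g := ⟨_, rfl⟩
      have hv_mem : v ∈ Subgroup.zpowers g := ⟨_, rfl⟩
      have hu_ord : orderOf u ∣ n' := by
        apply orderOf_dvd_of_pow_eq_one
        rw [hudef, ← zpow_natCast, ← zpow_mul]
        have heq : (m : ℤ) * Nat.gcdA m n' * n' = (o : ℤ) * Nat.gcdA m n' := by
          have : ((m : ℤ) * n') = (o : ℤ) := by exact_mod_cast congrArg Nat.cast hmn
          linear_combination Nat.gcdA m n' * this
        rw [heq, zpow_mul, hgo1, one_zpow]
      have hv_ord : orderOf v ∣ m := by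
        apply orderOf_dvd_of_pow_eq_one
        rw [hvdef, ← zpow_natCast, ← zpow_mul]
        have heq : (n' : ℤ) * Nat.gcdB m n' * m = (o : ℤ) * Nat.gcdB m n' := by
          have : ((m : ℤ) * n') = (o : ℤ) := by exact_mod_cast congrArg Nat.cast hmn
          linear_combination Nat.gcdB m n' * this
        rw [heq, zpow_mul, hgo1, one_zpow]
      have hzu : Subgroup.zpowers u ≤ Subgroup.zpowers g := Subgroup.zpowers_le.mpr hu_mem
      have hzv : Subgroup.zpowers v ≤ Subgroup.zpowers g := Subgroup.zpowers_le.mpr hv_mem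
      have hu_in : u ∈ K :=
        iho (orderOf u) (lt_of_le_of_lt (Nat.le_of_dvd hn'pos hu_ord) hn'lt) u rfl
          (fun h hh hp' => hKg h (hzu hh) hp')
      have hv_in : v ∈ K :=
        iho (orderOf v) (lt_of_le_of_lt (Nat.le_of_dvd (by omega) hv_ord) hmlt) v rfl
          (fun h hh hp' => hKg h (hzv hh) hp')
      rw [hguv]
      exact K.mul_mem hu_in hv_in
  exact main (orderOf g) g rfl hK

/-- A prime power order element of a nilpotent normal subgroup lies in a normal `q`-subgroup. -/
theorem exists_normal_pgroup_of_mem_nilpotent {N : Subgroup H} (hN : N.Normal)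
    (hnil : Group.IsNilpotent ↥N) {q : ℕ} (hq : q.Prime) {g : H} (hg : g ∈ N)
    (hord : ∃ k, orderOf g = q ^ k) :
    ∃ J : Subgroup H, J.Normal ∧ IsPGroup q J ∧ g ∈ J := by
  haveI : Fact q.Prime := ⟨hq⟩
  haveI := hN
  set gN : ↥N := ⟨g, hg⟩ with hgN
  have hordN : ∃ k, orderOf gN = q ^ k := by
    obtain ⟨k, hk⟩ := hord
    exact ⟨k, by rw [← hk, ← orderOf_injective N.subtype Subtype.coe_injective gN]; rfl⟩
  have hpg : IsPGroup q (Subgroup.zpowers gN) := by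
    obtain ⟨k, hk⟩ := hordN
    exact IsPGroup.of_card (by rw [Nat.card_zpowers, hk])
  obtain ⟨S, hS⟩ := hpg.exists_le_sylow
  have h14 := (isNilpotent_of_finite_tfae (G := ↥N)).out 0 3 rfl rfl
  have hSnorm : (S : Subgroup ↥N).Normal := h14.mp hnil q ⟨hq⟩ S
  haveI : (S : Subgroup ↥N).Characteristic := Sylow.characteristic_of_normal S hSnorm
  refine ⟨(S : Subgroup ↥N).map N.subtype, inferInstance,
    S.isPGroup'.map _, Subgroup.mem_map.mpr ⟨gN, hS (Subgroup.mem_zpowers gN), rfl⟩⟩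

theorem fittingSubgroup_le_cores {p : ℕ} (hp : p.Prime) :
    FittingSubgroup H ≤ pCoreSub H p ⊔ pPrimeCoreSub H p := by
  apply sSup_le
  rintro N ⟨hNnorm, hNnil⟩
  intro g hg
  apply mem_of_primePow_mem g
  intro h hh hpph
  obtain ⟨q, k, hqp, hkpos, hqk⟩ := hpph
  have hq : q.Prime := Nat.prime_iff.mpr hqp
  have hhN : h ∈ N := (Subgroup.zpowers_le.mpr hg) hh
  obtain ⟨J, hJnorm, hJpgrp, hJmem⟩ :=
    exists_normal_pgroup_of_mem_nilpotent hNnorm hNnil hq hhN ⟨k, hqk.symm⟩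
  rcases eq_or_ne q p with hqeq | hqne
  · subst hqeq
    have hmemS : J ∈ {N : Subgroup H | N.Normal ∧ IsPGroup q N} := ⟨hJnorm, hJpgrp⟩
    exact Subgroup.mem_sup_left (le_sSup hmemS hJmem)
  · have hcard : ¬ p ∣ Nat.card J := by
      haveI : Fact q.Prime := ⟨hq⟩
      obtain ⟨m, hm⟩ := IsPGroup.iff_card.mp hJpgrp
      rw [hm]
      intro hdvd
      exact hqne ((Nat.prime_dvd_prime_iff_eq hp hq).mp (hp.dvd_of_dvd_pow hdvd)).symm
    have hmemS : J ∈ {N : Subgroup H | N.Normal ∧ ¬ p ∣ Nat.card N} := ⟨hJnorm, hcard⟩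
    exact Subgroup.mem_sup_right (le_sSup hmemS hJmem)

theorem inf_pCore_pPrime_eq_bot {p : ℕ} (hp : p.Prime) :
    pCoreSub H p ⊓ pPrimeCoreSub H p = ⊥ := by
  rw [eq_bot_iff]
  intro x ⟨hx1, hx2⟩
  obtain ⟨k, hk⟩ := exists_orderOf_eq_pow hp (isPGroup_pCoreSub (H := H) p) hx1
  have h2 : orderOf x ∣ Nat.card (pPrimeCoreSub H p) := Subgroup.orderOf_dvd_natCard _ hx2
  have hk0 : k = 0 := by
    by_contra hk0
    apply not_dvd_card_pPrimeCoreSub (H := H) hp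
    calc p ∣ p ^ k := dvd_pow_self p hk0
    _ = orderOf x := hk.symm
    _ ∣ _ := h2
  rw [Subgroup.mem_bot, ← orderOf_eq_one_iff, hk, hk0, pow_zero]

open scoped commutatorElement in
theorem commute_pCore_pPrime {p : ℕ} (hp : p.Prime) {a b : H}
    (ha : a ∈ pCoreSub H p) (hb : b ∈ pPrimeCoreSub H p) : Commute a b := by
  haveI := pCoreSub_normal (H := H) p
  haveI := pPrimeCoreSub_normal (H := H) p
  rw [← commutatorElement_eq_one_iff_commute]
  have h1 : ⁅a, b⁆ ∈ pCoreSub H p := by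
    have : a * (b * a⁻¹ * b⁻¹) ∈ pCoreSub H p :=
      Subgroup.mul_mem _ ha (by simpa using (pCoreSub_normal p).conj_mem a⁻¹ (inv_mem ha) b)
    simpa [commutatorElement_def, mul_assoc] using this
  have h2 : ⁅a, b⁆ ∈ pPrimeCoreSub H p := by
    have : (a * b * a⁻¹) * b⁻¹ ∈ pPrimeCoreSub H p :=
      Subgroup.mul_mem _ ((pPrimeCoreSub_normal p).conj_mem b hb a) (inv_mem hb)
    simpa [commutatorElement_def, mul_assoc] using this
  have := inf_pCore_pPrime_eq_bot (H := H) hp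
  have hmem : ⁅a, b⁆ ∈ pCoreSub H p ⊓ pPrimeCoreSub H p := ⟨h1, h2⟩
  rw [this, Subgroup.mem_bot] at hmem
  exact hmem

theorem mem_pCore_of_mem_fitting {p : ℕ} (hp : p.Prime) {x : H}
    (hx : x ∈ FittingSubgroup H) (hord : ∃ a, orderOf x = p ^ a) : x ∈ pCoreSub H p := by
  haveI := pPrimeCoreSub_normal (H := H) p
  have h1 : x ∈ pCoreSub H p ⊔ pPrimeCoreSub H p := fittingSubgroup_le_cores hp hx
  have h2 : (x : H) ∈ (pCoreSub H p : Set H) * (pPrimeCoreSub H p : Set H) := by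
    rw [← Subgroup.mul_normal]
    exact h1
  obtain ⟨a, ha0, v, hv0, hxeq0⟩ := h2
  have ha : a ∈ pCoreSub H p := ha0
  have hv : v ∈ pPrimeCoreSub H p := hv0
  have hxeq : a * v = x := hxeq0
  subst hxeq
  have hcomm : Commute a v := commute_pCore_pPrime hp ha hv
  obtain ⟨e, he⟩ := hord
  have hpow1 : a ^ p ^ e * v ^ p ^ e = 1 := by
    rw [← hcomm.mul_pow, ← he, pow_orderOf_eq_one]
  have hpow1' : v ^ p ^ e * a ^ p ^ e = 1 := by
    rw [← (hcomm.pow_pow (p ^ e) (p ^ e)).eq]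
    exact hpow1
  have hva : v ^ p ^ e = (a ^ p ^ e)⁻¹ := eq_inv_of_mul_eq_one_left hpow1'
  have hv1 : v ^ p ^ e ∈ pCoreSub H p ⊓ pPrimeCoreSub H p :=
    ⟨hva ▸ (pCoreSub H p).inv_mem ((pCoreSub H p).pow_mem ha (p ^ e)), (pPrimeCoreSub H p).pow_mem hv (p ^ e)⟩
  rw [inf_pCore_pPrime_eq_bot hp, Subgroup.mem_bot] at hv1
  have hvord : orderOf v ∣ p ^ e := orderOf_dvd_of_pow_eq_one hv1
  obtain ⟨j, _, hj⟩ := (Nat.dvd_prime_pow hp).mp hvord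
  have hj0 : j = 0 := by
    by_contra hj0
    apply not_dvd_card_pPrimeCoreSub (H := H) hp
    calc p ∣ p ^ j := dvd_pow_self p hj0
    _ = orderOf v := hj.symm
    _ ∣ _ := Subgroup.orderOf_dvd_natCard _ hv
  have hv1' : v = 1 := by rw [← orderOf_eq_one_iff, hj, hj0, pow_zero]
  rw [hv1', mul_one]
  exact ha

theorem commute_of_mem_fitting {p q : ℕ} (hp : p.Prime) (hq : q.Prime) (hpq : p ≠ q)
    {x u : H} (hx : x ∈ FittingSubgroup H) (hu : u ∈ FittingSubgroup H)
    (hxo : ∃ a, orderOf x = p ^ a) (huo : ∃ b, orderOf u = q ^ b) : Commute x u := by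
  have h1 : x ∈ pCoreSub H p := mem_pCore_of_mem_fitting hp hx hxo
  have h2 : u ∈ pCoreSub H q := mem_pCore_of_mem_fitting hq hu huo
  have h3 : pCoreSub H q ≤ pPrimeCoreSub H p := by
    apply sSup_le
    rintro N ⟨hNnorm, hNp⟩
    have hcard : ¬ p ∣ Nat.card N := by
      haveI : Fact q.Prime := ⟨hq⟩
      obtain ⟨m, hm⟩ := IsPGroup.iff_card.mp hNp
      rw [hm]
      intro hdvd
      exact hpq ((Nat.prime_dvd_prime_iff_eq hp hq).mp (hp.dvd_of_dvd_pow hdvd))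
    have hmemS : N ∈ {K : Subgroup H | K.Normal ∧ ¬ p ∣ Nat.card K} := ⟨hNnorm, hcard⟩
    exact le_sSup hmemS
  exact commute_pCore_pPrime hp h1 (h3 h2)

end Coprime2
section TowerC

universe u
variable {H : Type u} [Group H]

/-- The subgroup of elements of `A` whose commutators with `B` land in `D`,
given that `A` normalizes `D`. -/
def relCent (A B D : Subgroup H)
    (hnorm : ∀ a ∈ A, ∀ x ∈ D, a * x * a⁻¹ ∈ D) : Subgroup H where
  carrier := setOf fun x => x ∈ A ∧ ∀ y ∈ B, x * y * x⁻¹ * y⁻¹ ∈ D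
  one_mem' := by
    refine ⟨A.one_mem, fun y hy => ?_⟩
    have h1 : (1 : H) * y * 1⁻¹ * y⁻¹ = 1 := by group
    rw [h1]
    exact D.one_mem
  mul_mem' := by
    rintro x₁ x₂ ⟨h1Q, h1C⟩ ⟨h2Q, h2C⟩
    refine ⟨A.mul_mem h1Q h2Q, fun y hy => ?_⟩
    have heq : x₁ * x₂ * y * (x₁ * x₂)⁻¹ * y⁻¹ =
        (x₁ * (x₂ * y * x₂⁻¹ * y⁻¹) * x₁⁻¹) * (x₁ * y * x₁⁻¹ * y⁻¹) := by group
    rw [heq]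
    exact D.mul_mem (hnorm x₁ h1Q _ (h2C y hy)) (h1C y hy)
  inv_mem' := by
    rintro x ⟨hxQ, hxC⟩
    refine ⟨A.inv_mem hxQ, fun y hy => ?_⟩
    have heq : x⁻¹ * y * x⁻¹⁻¹ * y⁻¹ = x⁻¹ * (x * y * x⁻¹ * y⁻¹)⁻¹ * x⁻¹⁻¹ := by group
    rw [heq]
    exact hnorm x⁻¹ (A.inv_mem hxQ) _ (D.inv_mem (hxC y hy))

theorem mem_relCent {A B D : Subgroup H} {hnorm : ∀ a ∈ A, ∀ x ∈ D, a * x * a⁻¹ ∈ D} {x : H} :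
    x ∈ relCent A B D hnorm ↔ (x ∈ A ∧ ∀ y ∈ B, x * y * x⁻¹ * y⁻¹ ∈ D) := Iff.rfl

/-- Downward recursion construction of the centralizer chain of a quotient tower.
`towerCAux Q N hn d` represents `C (N - d)`; the invariant states that it is
normalized by `Q k` for all `k + d ≤ N`. -/
def towerCAux (Q : ℕ → Subgroup H) (N : ℕ)
    (hn : ∀ i j, i < j → j ≤ N → ∀ x ∈ Q i, ∀ y ∈ Q j, x * y * x⁻¹ ∈ Q j) :
    (d : ℕ) → {D : Subgroup H // ∀ k, k + d ≤ N → ∀ a ∈ Q k, ∀ x ∈ D, a * x * a⁻¹ ∈ D}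
  | 0 => ⟨⊥, by
      intro k _ a _ x hx
      rw [Subgroup.mem_bot] at hx
      simp [hx]⟩
  | d + 1 =>
    if hd : d + 1 ≤ N then
    ⟨relCent (Q (N - d - 1)) (Q (N - d)) (towerCAux Q N hn d).1
        (fun a ha x hx => (towerCAux Q N hn d).2 (N - d - 1) (by omega) a ha x hx), by
      rintro k hk a ha x hx
      obtain ⟨hxQ, hxC⟩ := mem_relCent.mp hx
      rw [mem_relCent]
      have haxQ : a * x * a⁻¹ ∈ Q (N - d - 1) := by
        rcases Nat.lt_or_ge k (N - d - 1) with hlt | hge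
        · exact hn k (N - d - 1) hlt (by omega) a ha x hxQ
        · have hkeq : k = N - d - 1 := by omega
          subst hkeq
          exact (Q (N - d - 1)).mul_mem ((Q (N - d - 1)).mul_mem ha hxQ)
            ((Q (N - d - 1)).inv_mem ha)
      refine ⟨haxQ, fun y hy => ?_⟩
      have hya : a⁻¹ * y * a⁻¹⁻¹ ∈ Q (N - d) := by
        have hklt : k < N - d := by omega
        exact hn k (N - d) hklt (by omega) a⁻¹ ((Q k).inv_mem ha) y hy
      have heq : (a * x * a⁻¹) * y * (a * x * a⁻¹)⁻¹ * y⁻¹ =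
          a * (x * (a⁻¹ * y * a⁻¹⁻¹) * x⁻¹ * (a⁻¹ * y * a⁻¹⁻¹)⁻¹) * a⁻¹ := by group
      rw [heq]
      exact (towerCAux Q N hn d).2 k (by omega) a ha _ (hxC _ hya)⟩
    else ⟨⊥, by
      intro k _ a _ x hx
      rw [Subgroup.mem_bot] at hx
      simp [hx]⟩

theorem towerCAux_zero (Q : ℕ → Subgroup H) (N : ℕ)
    (hn : ∀ i j, i < j → j ≤ N → ∀ x ∈ Q i, ∀ y ∈ Q j, x * y * x⁻¹ ∈ Q j) :
    (towerCAux Q N hn 0).1 = ⊥ := rfl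

theorem towerCAux_succ_mem (Q : ℕ → Subgroup H) (N : ℕ)
    (hn : ∀ i j, i < j → j ≤ N → ∀ x ∈ Q i, ∀ y ∈ Q j, x * y * x⁻¹ ∈ Q j) (d : ℕ)
    (hd : d + 1 ≤ N) (x : H) :
    x ∈ (towerCAux Q N hn (d + 1)).1 ↔
      (x ∈ Q (N - d - 1) ∧ ∀ y ∈ Q (N - d), x * y * x⁻¹ * y⁻¹ ∈ (towerCAux Q N hn d).1) := by
  have : towerCAux Q N hn (d + 1) = if hd : d + 1 ≤ N then _ else _ := rfl
  rw [this, dif_pos hd]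
  exact Iff.rfl

end TowerC
section Lower

universe u

theorem le_of_weakTower :
    ∀ (m : ℕ) (G : Type u) [Group G] [Finite G] (n : ℕ) (P : ℕ → Subgroup G),
    IsWeakTower n P → fittingSeries G m = ⊤ → n ≤ m := by
  intro m
  induction m with
  | zero =>
    intro G _ _ n P hT hftop
    by_contra hcon
    have hn : 1 ≤ n := by omega
    obtain ⟨_, _, ⟨C, hCn, _, hCne⟩⟩ := hT
    apply hCne n hn le_rfl
    have hbot : (⊤ : Subgroup G) = ⊥ := by
      rw [← hftop, fittingSeries_zero]
    have : P n = ⊥ := le_antisymm (le_top.trans (le_of_eq hbot)) bot_le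
    rw [this, hCn]
  | succ m ih =>
    intro G _ _ n P hT hftop
    rcases Nat.lt_or_ge n 2 with hn1 | hn2
    · omega
    obtain ⟨⟨p, hp, hpne⟩, hnorm, ⟨C, hCn, hCrec, hCne⟩⟩ := hT
    have hnn : n - 1 + 1 = n := by omega
    set F := fittingSeries G 1 with hFdef
    set π := QuotientGroup.mk' F with hπdef
    haveI : Finite (G ⧸ F) := Quotient.finite _
    -- C i ≤ P i
    have hCle : ∀ i, 1 ≤ i → i ≤ n → C i ≤ P i := by
      intro i h1 h2
      rcases Nat.lt_or_ge i n with hlt | hge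
      · intro x hx
        have hx' : x ∈ (C i : Set G) := hx
        rw [hCrec i h1 hlt] at hx'
        exact hx'.1
      · have : i = n := by omega
        rw [this, hCn]
        exact bot_le
    -- coprime commuting in F
    have hcomm : ∀ (x u : G), x ∈ F → u ∈ F →
        ∀ (pp qq : ℕ), pp.Prime → qq.Prime → pp ≠ qq →
        (∃ a, orderOf x = pp ^ a) → (∃ b, orderOf u = qq ^ b) → Commute x u := by
      intro x u hx hu pp qq hpp hqq hne hxo huo
      set φ := QuotientGroup.mk' (fittingSeries G 0) with hφdef
      haveI : Finite (G ⧸ fittingSeries G 0) := Quotient.finite _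
      have hinj : Function.Injective φ := by
        rw [← MonoidHom.ker_eq_bot_iff, QuotientGroup.ker_mk']
        rfl
      have hxF : φ x ∈ FittingSubgroup (G ⧸ fittingSeries G 0) := by
        have hx1 : x ∈ (FittingSubgroup (G ⧸ fittingSeries G 0)).comap φ := by
          rw [← fittingSeries_succ]
          exact hx
        exact hx1
      have huF : φ u ∈ FittingSubgroup (G ⧸ fittingSeries G 0) := by
        have hu1 : u ∈ (FittingSubgroup (G ⧸ fittingSeries G 0)).comap φ := by
          rw [← fittingSeries_succ]
          exact hu
        exact hu1
      have hxo' : ∃ a, orderOf (φ x) = pp ^ a := by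
        obtain ⟨a, ha⟩ := hxo
        exact ⟨a, by rw [orderOf_injective φ hinj, ha]⟩
      have huo' : ∃ b, orderOf (φ u) = qq ^ b := by
        obtain ⟨b, hb⟩ := huo
        exact ⟨b, by rw [orderOf_injective φ hinj, hb]⟩
      have hc := commute_of_mem_fitting hpp hqq hne hxF huF hxo' huo'
      have : φ (x * u) = φ (u * x) := by
        rw [map_mul, map_mul]
        exact hc.eq
      exact hinj this
    -- orders of elements of P i
    have hordP : ∀ i, 1 ≤ i → i ≤ n → ∀ x ∈ P i, ∃ k, orderOf x = (p i) ^ k := by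
      intro i h1 h2 x hx
      exact exists_orderOf_eq_pow (hp i h1 h2).1 (hp i h1 h2).2 hx
    -- commutators land in F and P j
    have hbr : ∀ i j, 1 ≤ i → i < j → j ≤ n → ∀ x, x ∈ F → x ∈ P i → ∀ y ∈ P j,
        x * y * x⁻¹ * y⁻¹ ∈ F ∧ x * y * x⁻¹ * y⁻¹ ∈ P j := by
      intro i j h1 h2 h3 x hxF hxP y hy
      constructor
      · have hconj : y * x⁻¹ * y⁻¹ ∈ F := (fittingSeries_normal G 1).conj_mem x⁻¹ (inv_mem hxF) y
        have : x * (y * x⁻¹ * y⁻¹) ∈ F := mul_mem hxF hconj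
        have heq : x * (y * x⁻¹ * y⁻¹) = x * y * x⁻¹ * y⁻¹ := by group
        rwa [heq] at this
      · exact (P j).mul_mem (hnorm i j h1 h2 h3 x hxP y hy) ((P j).inv_mem hy)
    -- conjugation power identity
    have hpowc : ∀ (x u y : G), Commute x u → x * y * x⁻¹ = u * y →
        ∀ k : ℕ, x ^ k * y * (x ^ k)⁻¹ = u ^ k * y := by
      intro x u y hc hxy k
      induction k with
      | zero => simp
      | succ k ihk =>
        have h1 : x ^ (k+1) = x * x ^ k := by rw [pow_succ']
        rw [h1, mul_inv_rev]
        have h2 : x * x ^ k * y * ((x ^ k)⁻¹ * x⁻¹) = x * (x ^ k * y * (x ^ k)⁻¹) * x⁻¹ := by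
          group
        rw [h2, ihk]
        have h3 : x * (u ^ k * y) * x⁻¹ = u ^ k * (x * y * x⁻¹) := by
          have hcx : x * u ^ k = u ^ k * x := (hc.pow_right k).eq
          calc x * (u ^ k * y) * x⁻¹ = (x * u ^ k) * y * x⁻¹ := by group
          _ = (u ^ k * x) * y * x⁻¹ := by rw [hcx]
          _ = u ^ k * (x * y * x⁻¹) := by group
        rw [h3, hxy, pow_succ']
        group
    -- key: commutator of an F∩P i element with P (i+1) is trivial at top level
    have hbase : ∀ x, x ∈ F → x ∈ P (n-1) → ∀ y ∈ P n, x * y * x⁻¹ * y⁻¹ = 1 := by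
      intro x hxF hxP y hy
      set u := x * y * x⁻¹ * y⁻¹ with hudef
      obtain ⟨huF, huP⟩ := hbr (n-1) n (by omega) (by omega) le_rfl x hxF hxP y hy
      obtain ⟨a, hxa⟩ := hordP (n-1) (by omega) (by omega) x hxP
      obtain ⟨b, hub⟩ := hordP n (by omega) le_rfl u huP
      have hpne' : p n ≠ p (n-1) := by
        have := hpne (n-1) (by omega) (by omega)
        rwa [hnn] at this
      have hc : Commute x u := hcomm x u hxF huF (p (n-1)) (p n)
        (hp (n-1) (by omega) (by omega)).1 (hp n (by omega) le_rfl).1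
        hpne'.symm ⟨a, hxa⟩ ⟨b, hub⟩
      have hxy : x * y * x⁻¹ = u * y := by rw [hudef]; group
      have hiter := hpowc x u y hc hxy (orderOf x)
      rw [pow_orderOf_eq_one] at hiter
      have hupow : u ^ orderOf x = 1 := by
        have : (1 : G) * y * (1 : G)⁻¹ = y := by group
        rw [this] at hiter
        have h4 : u ^ orderOf x * y * y⁻¹ = y * y⁻¹ := by rw [← hiter]
        simpa using h4
      have hudvd : orderOf u ∣ (p (n-1)) ^ a := by
        rw [← hxa]
        exact orderOf_dvd_of_pow_eq_one hupow
      rw [hub] at hudvd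
      have hb0 : b = 0 := by
        by_contra hb0
        have h5 : p n ∣ (p (n-1)) ^ a := dvd_trans (dvd_pow_self (p n) hb0) hudvd
        have h6 : p n ∣ p (n-1) :=
          Nat.Prime.dvd_of_dvd_pow (hp n (by omega) le_rfl).1 h5
        exact hpne' ((Nat.prime_dvd_prime_iff_eq (hp n (by omega) le_rfl).1
          (hp (n-1) (by omega) (by omega)).1).mp h6)
      rw [← orderOf_eq_one_iff, hub, hb0, pow_zero]
    -- Lemma R: F ⊓ P j ≤ C j
    have hR : ∀ d j, 1 ≤ j → j + d = n - 1 → ∀ x, x ∈ F → x ∈ P j → x ∈ C j := by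
      intro d
      induction d with
      | zero =>
        intro j h1 hj x hxF hxP
        have hjn : j = n - 1 := by omega
        subst hjn
        have hset := hCrec (n-1) h1 (by omega)
        have : x ∈ (C (n-1) : Set G) := by
          rw [hset]
          refine ⟨hxP, fun y hy => ?_⟩
          rw [hnn] at hy ⊢
          rw [hCn, Subgroup.mem_bot]
          exact hbase x hxF hxP y hy
        exact this
      | succ d ihd =>
        intro j h1 hj x hxF hxP
        have hset := hCrec j h1 (by omega)
        have : x ∈ (C j : Set G) := by
          rw [hset]
          refine ⟨hxP, fun y hy => ?_⟩
          obtain ⟨h1', h2'⟩ := hbr j (j+1) h1 (by omega) (by omega) x hxF hxP y hy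
          exact ihd (j+1) (by omega) (by omega) _ h1' h2'
        exact this
    have hR' : ∀ j, 1 ≤ j → j ≤ n - 1 → ∀ x, x ∈ F → x ∈ P j → x ∈ C j := by
      intro j h1 h2
      exact hR (n - 1 - j) j h1 (by omega)
    -- the quotient tower
    set Qb : ℕ → Subgroup (G ⧸ F) := fun i => if i = 0 then ⊥ else Subgroup.map π (P i)
      with hQbdef
    have hQb1 : ∀ i, 1 ≤ i → Qb i = Subgroup.map π (P i) := by
      intro i h1
      simp only [hQbdef, if_neg (by omega : ¬ i = 0)]
    have hn' : ∀ i j, i < j → j ≤ n - 1 → ∀ x ∈ Qb i, ∀ y ∈ Qb j, x * y * x⁻¹ ∈ Qb j := by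
      intro i j hij hj x hx y hy
      rcases Nat.eq_zero_or_pos i with hi0 | hi1
      · subst hi0
        simp only [hQbdef, if_pos rfl, Subgroup.mem_bot] at hx
        subst hx
        simpa using hy
      · rw [hQb1 i hi1] at hx
        rw [hQb1 j (by omega)] at hy ⊢
        obtain ⟨a, ha, rfl⟩ := Subgroup.mem_map.mp hx
        obtain ⟨b, hb, rfl⟩ := Subgroup.mem_map.mp hy
        rw [← map_inv, ← map_mul, ← map_mul]
        exact Subgroup.mem_map_of_mem π (hnorm i j hi1 hij (by omega) a ha b hb)
    set C' : ℕ → Subgroup (G ⧸ F) := fun i => (towerCAux Qb (n-1) hn' (n-1-i)).1 with hC'def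
    -- pullback of C' is inside C
    have hDle : ∀ d j, 1 ≤ j → j + d = n - 1 → ∀ x, x ∈ P j → π x ∈ C' j → x ∈ C j := by
      intro d
      induction d with
      | zero =>
        intro j h1 hj x hxP hxC'
        have hjn : j = n - 1 := by omega
        subst hjn
        have hC'bot : C' (n-1) = ⊥ := by
          show (towerCAux Qb (n-1) hn' (n - 1 - (n - 1))).1 = ⊥
          have h0 : n - 1 - (n - 1) = 0 := by omega
          rw [h0]
          rfl
        rw [hC'bot, Subgroup.mem_bot] at hxC'
        have hxF : x ∈ F := by
          have : x ∈ π.ker := MonoidHom.mem_ker.mpr hxC'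
          rwa [hπdef, QuotientGroup.ker_mk'] at this
        exact hR' (n-1) h1 le_rfl x hxF hxP
      | succ d ihd =>
        intro j h1 hj x hxP hxC'
        have hd1 : n - 1 - j = d + 1 := by omega
        have hmem : π x ∈ (towerCAux Qb (n-1) hn' (d+1)).1 := by
          have hxC'' : π x ∈ (towerCAux Qb (n-1) hn' (n - 1 - j)).1 := hxC'
          rwa [hd1] at hxC''
        rw [towerCAux_succ_mem Qb (n-1) hn' d (by omega)] at hmem
        obtain ⟨_, hcomm'⟩ := hmem
        have hset := hCrec j h1 (by omega)
        have : x ∈ (C j : Set G) := by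
          rw [hset]
          refine ⟨hxP, fun y hy => ?_⟩
          have hyin : π y ∈ Qb (n - 1 - d) := by
            have he2 : n - 1 - d = j + 1 := by omega
            rw [he2, hQb1 (j+1) (by omega)]
            exact Subgroup.mem_map_of_mem π hy
          have hcy := hcomm' (π y) hyin
          have heq : π x * π y * (π x)⁻¹ * (π y)⁻¹ = π (x * y * x⁻¹ * y⁻¹) := by
            rw [map_mul, map_mul, map_mul, map_inv, map_inv]
          rw [heq] at hcy
          have hin : π (x * y * x⁻¹ * y⁻¹) ∈ C' (j+1) := by
            show π (x * y * x⁻¹ * y⁻¹) ∈ (towerCAux Qb (n-1) hn' (n - 1 - (j + 1))).1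
            have he4 : n - 1 - (j + 1) = d := by omega
            rw [he4]
            exact hcy
          have hxyP : x * y * x⁻¹ * y⁻¹ ∈ P (j+1) :=
            (P (j+1)).mul_mem (hnorm j (j+1) h1 (by omega) (by omega) x hxP y hy)
              ((P (j+1)).inv_mem hy)
          exact ihd (j+1) (by omega) (by omega) _ hxyP hin
        exact this
    have hDle' : ∀ j, 1 ≤ j → j ≤ n - 1 → ∀ x, x ∈ P j → π x ∈ C' j → x ∈ C j := by
      intro j h1 h2
      exact hDle (n - 1 - j) j h1 (by omega)
    -- the quotient weak tower
    have hWT : IsWeakTower (n-1) Qb := by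
      refine ⟨⟨p, ?_, ?_⟩, ?_, ⟨C', ?_, ?_, ?_⟩⟩
      · intro i h1 h2
        refine ⟨(hp i h1 (by omega)).1, ?_⟩
        rw [hQb1 i h1]
        exact ((hp i h1 (by omega)).2).map π
      · intro i h1 h2
        exact hpne i h1 (by omega)
      · intro i j h1 h2 h3 x hx y hy
        exact hn' i j h2 h3 x hx y hy
      · show (towerCAux Qb (n-1) hn' (n - 1 - (n - 1))).1 = ⊥
        have h0 : n - 1 - (n - 1) = 0 := by omega
        rw [h0]
        rfl
      · intro i h1 h2
        have hd1 : n - 1 - i = (n - 1 - i - 1) + 1 := by omega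
        ext x
        rw [Set.mem_setOf_eq]
        have hmemiff : x ∈ C' i ↔ x ∈ (towerCAux Qb (n-1) hn' ((n - 1 - i - 1) + 1)).1 := by
          show x ∈ (towerCAux Qb (n-1) hn' (n - 1 - i)).1 ↔ _
          rw [← hd1]
        rw [SetLike.mem_coe, hmemiff, towerCAux_succ_mem Qb (n-1) hn' (n-1-i-1) (by omega)]
        have e1 : n - 1 - (n - 1 - i - 1) - 1 = i := by omega
        have e2 : n - 1 - (n - 1 - i - 1) = i + 1 := by omega
        have e3 : n - 1 - i - 1 = n - 1 - (i + 1) := by omega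
        rw [e1, e2, e3]
      · intro i h1 h2 heq
        have hex : ∃ x, x ∈ P i ∧ x ∉ C i := by
          by_contra hno
          push_neg at hno
          exact hCne i h1 (by omega) (le_antisymm (hCle i h1 (by omega)) hno)
        obtain ⟨x, hxP, hxC⟩ := hex
        apply hxC
        have hπx : π x ∈ Qb i := by
          rw [hQb1 i h1]
          exact Subgroup.mem_map_of_mem π hxP
        rw [← heq] at hπx
        exact hDle' i h1 h2 x hxP hπx
    -- conclude by induction
    have hF'top : fittingSeries (G ⧸ F) m = ⊤ := by
      have hle := map_fittingSeries_le G m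
      rw [hftop] at hle
      have hmaptop : Subgroup.map (QuotientGroup.mk' (fittingSeries G 1)) ⊤ = ⊤ := by
        rw [Subgroup.map_top_of_surjective _ (QuotientGroup.mk'_surjective _)]
      rw [hmaptop] at hle
      exact top_le_iff.mp hle
    have := ih (G ⧸ F) (n-1) Qb hWT hF'top
    omega

end Lower
section Assemble

universe u

open scoped commutatorElement in
theorem isWeakTower_of_isTower {G : Type u} [Group G] (n : ℕ) (P : ℕ → Subgroup G)
    (hT : IsTower n P) : IsWeakTower n P := by
  obtain ⟨hnontriv, hprimes, hnorm, ⟨C, hCn, hCrec, hjoin⟩⟩ := hT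
  have hCle : ∀ i, 1 ≤ i → i ≤ n → C i ≤ P i := by
    intro i h1 h2
    rcases Nat.lt_or_ge i n with hlt | hge
    · intro x hx
      have hx' : x ∈ (C i : Set G) := hx
      rw [hCrec i h1 hlt] at hx'
      exact hx'.1
    · have : i = n := by omega
      rw [this, hCn]
      exact bot_le
  refine ⟨hprimes, hnorm, ⟨C, hCn, hCrec, ?_⟩⟩
  have key : ∀ d i, 1 ≤ i → i + d = n → C i = P i → False := by
    intro d
    induction d with
    | zero =>
      intro i h1 hi hCP
      have hin : i = n := by omega
      subst hin
      exact hnontriv i h1 le_rfl (by rw [← hCP, hCn])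
    | succ d ihd =>
      intro i h1 hi hCP
      apply ihd (i+1) (by omega) (by omega)
      have h2 : ⁅P (i + 1), P i⁆ ≤ C (i + 1) := by
        rw [Subgroup.commutator_le]
        intro g1 hg1 g2 hg2
        have hg2C : g2 ∈ (C i : Set G) := by rw [hCP]; exact hg2
        rw [hCrec i h1 (by omega)] at hg2C
        have hmem := hg2C.2 g1 hg1
        have hmem' := (C (i+1)).inv_mem hmem
        have hinv : (g2 * g1 * g2⁻¹ * g1⁻¹)⁻¹ = ⁅g1, g2⁆ := by
          rw [commutatorElement_def]; group
        rwa [hinv] at hmem'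
      have hj := hjoin (i+1) (by omega) (by omega)
      rw [Nat.add_sub_cancel] at hj
      have hle : P (i+1) ≤ C (i+1) := by
        rw [← hj]
        exact sup_le h2 le_rfl
      exact le_antisymm (hCle (i+1) (by omega) (by omega)) hle
  intro i h1 h2
  exact key (n - i) i h1 (by omega)

end Assemble

open scoped Pointwise in
/-- **Corollary 1**. If a finite solvable group is the product of the subgroups of a
tower of height `n`, then its Fitting height is `n`. -/
theorem fittingHeight_eq_of_tower
    (G : Type*) [Group G] [Finite G] [Group.IsSolvable G]
    (n : ℕ) (hn : 1 ≤ n) (P : ℕ → Subgroup G)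
    (hT : IsTower n P) (hprod : mulFrom P n n = Set.univ) :
    fittingHeight G = n := by
  have hT2 := hT
  obtain ⟨hnontriv, ⟨p, hp, hpne⟩, hnorm, _⟩ := hT2
  have htop : fittingSeries G n = ⊤ :=
    fittingSeries_eq_top_of_prod n G P
      (fun i h1 h2 => ⟨p i, (hp i h1 h2).1, (hp i h1 h2).2⟩) hnorm hprod
  have hlower : ∀ m, fittingSeries G m = ⊤ → n ≤ m := fun m hm =>
    le_of_weakTower m G n P (isWeakTower_of_isTower n P hT) hm
  rw [fittingHeight]
  apply le_antisymm
  · exact Nat.sInf_le htop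
  · have hne : {k | fittingSeries G k = ⊤}.Nonempty := ⟨n, htop⟩
    exact hlower _ (Nat.sInf_mem hne)
end

section
/- Let {P_n,…,P_1} be a tower in a finite solvable group G with G = P_n⋯P_1. Then for every i with 1 ≤ i ≤ n, the product N_i = P_n⋯P_i is a normal subgroup of G, and ρ_{i-1}(G) ≤ P_n⋯P_i, where ρ_0(G)=G, ρ_1(G) is the intersection of the lower central series of G, and ρ_k(G)=ρ_1(ρ_{k-1}(G)) for k ≥ 2. -/
open Pointwise

/-- Partial products of the tower as subgroups: `towerProd P n k = P n ⊔ ⋯ ⊔ P (n-k+1)`. -/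
def towerProd {G : Type*} [Group G] (P : ℕ → Subgroup G) (n : ℕ) : ℕ → Subgroup G
  | 0 => ⊥
  | k + 1 => towerProd P n k ⊔ P (n - k)

section TP
variable {G : Type*} [Group G] {P : ℕ → Subgroup G} {n : ℕ}

lemma tp_P_le : ∀ k, k ≤ n → ∀ m, n - k < m → m ≤ n → P m ≤ towerProd P n k := by
  intro k
  induction k with
  | zero => intro _ m hm1 hm2; omega
  | succ k ih =>
    intro hk m hm1 hm2
    rcases eq_or_ne m (n - k) with rfl | hne
    · exact le_sup_right
    · exact le_trans (ih (by omega) m (by omega) hm2) le_sup_left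

lemma tp_conj (hnorm : ∀ i j, 1 ≤ i → i < j → j ≤ n → ∀ x ∈ P i, ∀ y ∈ P j, x * y * x⁻¹ ∈ P j) :
    ∀ k, k ≤ n → ∀ j, 1 ≤ j → j ≤ n - k → ∀ x ∈ P j, ∀ y ∈ towerProd P n k,
      x * y * x⁻¹ ∈ towerProd P n k := by
  intro k
  induction k with
  | zero =>
    intro _ j _ _ x _ y hy
    rw [towerProd, Subgroup.mem_bot] at hy ⊢
    simp [hy]
  | succ k ih =>
    intro hk j hj1 hj2 x hx
    have hsub : towerProd P n (k + 1) ≤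
        Subgroup.comap ((MulAut.conj x).toMonoidHom) (towerProd P n (k + 1)) := by
      show towerProd P n k ⊔ P (n - k) ≤ _
      apply sup_le
      · intro y hy
        simp only [Subgroup.mem_comap, MulEquiv.coe_toMonoidHom, MulAut.conj_apply]
        exact Subgroup.mem_sup_left (ih (by omega) j hj1 (by omega) x hx y hy)
      · intro y hy
        simp only [Subgroup.mem_comap, MulEquiv.coe_toMonoidHom, MulAut.conj_apply]
        exact Subgroup.mem_sup_right (hnorm j (n - k) hj1 (by omega) (by omega) x hx y hy)
    intro y hy
    have := hsub hy
    simpa only [Subgroup.mem_comap, MulEquiv.coe_toMonoidHom, MulAut.conj_apply] using this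

lemma tp_mem_normalizer
    (hnorm : ∀ i j, 1 ≤ i → i < j → j ≤ n → ∀ x ∈ P i, ∀ y ∈ P j, x * y * x⁻¹ ∈ P j)
    {k : ℕ} (hk : k ≤ n) {j : ℕ} (hj1 : 1 ≤ j) (hj2 : j ≤ n) {x : G} (hx : x ∈ P j) :
    x ∈ Subgroup.normalizer (towerProd P n k : Set G) := by
  rcases le_or_gt j (n - k) with hle | hlt
  · rw [Subgroup.mem_normalizer_iff]
    intro h
    constructor
    · intro hh; exact tp_conj hnorm k hk j hj1 hle x hx h hh
    · intro hh
      have := tp_conj hnorm k hk j hj1 hle x⁻¹ (inv_mem hx) _ hh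
      have heq : x⁻¹ * (x * h * x⁻¹) * x⁻¹⁻¹ = h := by group
      rwa [heq] at this
  · exact Subgroup.le_normalizer (tp_P_le k hk j hlt hj2 hx)

lemma tp_normal
    (hnorm : ∀ i j, 1 ≤ i → i < j → j ≤ n → ∀ x ∈ P i, ∀ y ∈ P j, x * y * x⁻¹ ∈ P j)
    (hprod : mulFrom P n n = Set.univ) {k : ℕ} (hk : k ≤ n) :
    (towerProd P n k).Normal := by
  have hstep : ∀ m, m ≤ n → mulFrom P n m ⊆ ((Subgroup.normalizer (towerProd P n k : Set G) : Subgroup G) : Set G) := by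
    intro m
    induction m with
    | zero =>
      intro _ y hy
      rw [mulFrom, Set.mem_one] at hy
      subst hy
      exact Subgroup.one_mem _
    | succ m ih =>
      intro hm y hy
      rw [mulFrom] at hy
      obtain ⟨a, ha, b, hb, rfl⟩ := hy
      exact mul_mem (ih (by omega) ha)
        (tp_mem_normalizer hnorm hk (by omega) (by omega) hb)
  have : Subgroup.normalizer (towerProd P n k : Set G) = ⊤ := by
    rw [eq_top_iff]
    intro g _
    exact hstep n le_rfl (hprod ▸ Set.mem_univ g)
  exact Subgroup.normalizer_eq_top_iff.mp this

lemma tp_coe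
    (hnorm : ∀ i j, 1 ≤ i → i < j → j ≤ n → ∀ x ∈ P i, ∀ y ∈ P j, x * y * x⁻¹ ∈ P j)
    (hprod : mulFrom P n n = Set.univ) :
    ∀ k, k ≤ n → ((towerProd P n k : Set G)) = mulFrom P n k := by
  intro k
  induction k with
  | zero => intro _; rw [towerProd, mulFrom, Subgroup.coe_bot]; rfl
  | succ k ih =>
    intro hk
    haveI : (towerProd P n k).Normal := tp_normal hnorm hprod (by omega)
    show ((towerProd P n k ⊔ P (n - k) : Subgroup G) : Set G) = _
    rw [Subgroup.normal_mul, ih (by omega), mulFrom]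

end TP

open scoped Pointwise in
/-- For a tower `{P n, …, P 1}` in a finite solvable group `G` with `G = P n ⋯ P 1`,
every partial product `P n ⋯ P i` is a normal subgroup of `G` containing `ρ_{i-1}(G)`. -/
theorem rho_le_partial_product_of_tower
    (G : Type*) [Group G] [Finite G] [Group.IsSolvable G]
    (n : ℕ) (hn : 1 ≤ n) (P : ℕ → Subgroup G)
    (hT : IsTower n P) (hprod : mulFrom P n n = Set.univ) :
    ∀ i, 1 ≤ i → i ≤ n → ∃ N : Subgroup G, N.Normal ∧
      (N : Set G) = mulFrom P n (n - i + 1) ∧ rho G (i - 1) ≤ N := by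
  obtain ⟨-, ⟨p, hp, hpne⟩, hnorm, -⟩ := hT
  have htop : towerProd P n n = ⊤ := by
    rw [← Subgroup.coe_eq_univ, tp_coe hnorm hprod n le_rfl, hprod]
  have key : ∀ d, d ≤ n - 1 → rho G d ≤ towerProd P n (n - d) := by
    intro d
    induction d with
    | zero =>
      intro _
      show (⊤ : Subgroup G) ≤ towerProd P n (n - 0)
      rw [Nat.sub_zero, htop]
    | succ d ih =>
      intro hd
      have ihd := ih (by omega)
      set H : Subgroup G := rho G d with hH
      set K : Subgroup G := towerProd P n (n - d - 1) with hKdef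
      haveI hK : K.Normal := tp_normal hnorm hprod (by omega)
      have hQ : towerProd P n (n - d) = K ⊔ P (d + 1) := by
        have h1 : n - d = (n - d - 1) + 1 := by omega
        have h2 : n - (n - d - 1) = d + 1 := by omega
        rw [h1]
        show towerProd P n (n - d - 1) ⊔ P (n - (n - d - 1)) = _
        rw [h2]
      set π := QuotientGroup.mk' K with hπ
      set f : H →* G ⧸ K := π.comp H.subtype with hf
      have hπK : Subgroup.map π K = ⊥ := by
        rw [eq_bot_iff]
        rintro _ ⟨x, hx, rfl⟩
        rw [Subgroup.mem_bot, ← MonoidHom.mem_ker, QuotientGroup.ker_mk']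
        exact hx
      have hrange : IsPGroup (p (d + 1)) f.range := by
        have hle : f.range ≤ Subgroup.map π (P (d + 1)) := by
          rintro _ ⟨x, rfl⟩
          have hx : (x : G) ∈ towerProd P n (n - d) := ihd x.2
          rw [hQ] at hx
          have : f x = π (x : G) := rfl
          rw [this]
          have := Subgroup.map_sup K (P (d + 1)) π ▸ Subgroup.mem_map_of_mem π hx
          rwa [hπK, bot_sup_eq] at this
        exact ((hp (d + 1) (by omega) (by omega)).2.map π).to_le hle
      haveI : Fact (Nat.Prime (p (d + 1))) := ⟨(hp (d + 1) (by omega) (by omega)).1⟩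
      obtain ⟨m, hm⟩ := Subgroup.nilpotent_iff_lowerCentralSeries.mp hrange.isNilpotent
      have hmap : Subgroup.map f.rangeRestrict (Subgroup.lowerCentralSeries (⊤ : Subgroup H) m) ≤ ⊥ := by
        rw [← hm]
        exact Subgroup.lowerCentralSeries.map f.rangeRestrict m
      show Subgroup.map H.subtype (⨅ i : ℕ, Subgroup.lowerCentralSeries (⊤ : Subgroup H) i) ≤ towerProd P n (n - (d + 1))
      have hidx : n - (d + 1) = n - d - 1 := by omega
      rw [hidx, ← hKdef]
      rintro _ ⟨x, hx, rfl⟩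
      have hx' : x ∈ Subgroup.lowerCentralSeries (⊤ : Subgroup H) m := iInf_le (fun i => Subgroup.lowerCentralSeries (⊤ : Subgroup H) i) m hx
      have h1 : f.rangeRestrict x ∈ (⊥ : Subgroup f.range) :=
        hmap (Subgroup.mem_map_of_mem _ hx')
      rw [Subgroup.mem_bot] at h1
      have h2 : f x = 1 := congrArg Subtype.val h1
      have h3 : π (x : G) = 1 := h2
      rwa [← QuotientGroup.ker_mk' K, MonoidHom.mem_ker]
  intro i hi1 hin
  refine ⟨towerProd P n (n - i + 1), tp_normal hnorm hprod (by omega),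
    tp_coe hnorm hprod (n - i + 1) (by omega), ?_⟩
  have := key (i - 1) (by omega)
  have hidx : n - (i - 1) = n - i + 1 := by omega
  rwa [hidx] at this
end
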